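/- (Sufficient decrease for proximal gradient descent.) Let f : ℝ^d → ℝ be differentiable with L_f-Lipschitz gradient, let λ ≥ 0, and let Φ(x) = f(x) + λ‖x‖₁. For any L > L_f/2, define the prox-grad map T_L(x) = S_{λ/L}(x − (1/L)∇f(x)) and the gradient mapping G_L(x) = L·(x − T_L(x)). Then for every x ∈ ℝ^d, Φ(x) − Φ(T_L(x)) ≥ ((L − L_f/2)/L²)·‖G_L(x)‖². In particular, each proximal gradient iteration with stepsize 1/L, L > L_f/2, does not increase Φ. -/

import Mathlib

/-!
The descent lemma gives `f T ≤ f x + ⟪∇f x, T - x⟫ + (L_f/2)‖T - x‖²`. Soft thresholding is the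
proximity operator of `c‖·‖₁`, so `u - S_c u` is a subgradient of `c‖·‖₁` at `S_c u`; with
`u = x - ∇f(x)/L` and `c = λ/L` this yields `λ‖T‖₁ + L‖x - T‖² + ⟪∇f x, T - x⟫ ≤ λ‖x‖₁`.
Adding the two gives `Φ x - Φ T ≥ (L - L_f/2)‖x - T‖²`, and `‖G_L x‖ = L‖x - T‖`.
-/

/-- Soft-thresholding operator `S_c` on `ℝ^d`, defined componentwise by
`(S_c x)_i = sign(x_i) * max (|x_i| - c) 0`. -/
noncomputable def soft {d : ℕ} (c : ℝ) (x : EuclideanSpace ℝ (Fin d)) :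
    EuclideanSpace ℝ (Fin d) :=
  WithLp.toLp 2 fun i => Real.sign (x i) * max (|x i| - c) 0

noncomputable def softThreshold (c u : ℝ) : ℝ := Real.sign u * max (|u| - c) 0

lemma soft_apply {d : ℕ} (c : ℝ) (x : EuclideanSpace ℝ (Fin d)) (i : Fin d) :
    soft c x i = softThreshold c (x i) := rfl

-- `u - S_c u` is a subgradient of `c |·|` at `S_c u`.
lemma softThreshold_variational_ineq {c : ℝ} (hc : 0 ≤ c) (u y : ℝ) :
    c * |softThreshold c u| + (u - softThreshold c u) * (y - softThreshold c u) ≤ c * |y| := by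
  rcases le_or_gt |u| c with hu | hu
  · have ht : softThreshold c u = 0 := by simp [softThreshold, hu]
    rw [ht, abs_zero, sub_zero, sub_zero]
    nlinarith [le_abs_self (u * y), abs_mul u y, mul_le_mul_of_nonneg_right hu (abs_nonneg y)]
  · have hmax : max (|u| - c) 0 = |u| - c := max_eq_left (by linarith)
    rcases lt_or_gt_of_ne (show u ≠ 0 by rintro rfl; simp at hu; linarith) with hneg | hpos
    · have ht : softThreshold c u = u + c := by
        rw [softThreshold, hmax, Real.sign_of_neg hneg, abs_of_neg hneg]; ring
      rw [ht, abs_of_neg (by rw [abs_of_neg hneg] at hu; linarith)]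
      nlinarith [neg_abs_le y]
    · have ht : softThreshold c u = u - c := by
        rw [softThreshold, hmax, Real.sign_of_pos hpos, abs_of_pos hpos]; ring
      rw [ht, abs_of_nonneg (by rw [abs_of_pos hpos] at hu; linarith)]
      nlinarith [le_abs_self y]

lemma soft_variational_ineq {d : ℕ} {c : ℝ} (hc : 0 ≤ c) (u y : EuclideanSpace ℝ (Fin d)) :
    c * ∑ i, |soft c u i| + inner ℝ (u - soft c u) (y - soft c u) ≤ c * ∑ i, |y i| := by
  simp only [PiLp.inner_apply, RCLike.inner_apply, conj_trivial, PiLp.sub_apply, soft_apply,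
    Finset.mul_sum, ← Finset.sum_add_distrib]
  refine Finset.sum_le_sum fun i _ => ?_
  rw [mul_comm (y i - _)]
  exact softThreshold_variational_ineq hc (u i) (y i)

open Set

section Descent

variable {E : Type*} [NormedAddCommGroup E] [InnerProductSpace ℝ E] [CompleteSpace E]
  {f : E → ℝ} {Lf : ℝ}

lemma hasDerivAt_comp_add_smul (hf : Differentiable ℝ f) (x v : E) (t : ℝ) :
    HasDerivAt (fun s : ℝ => f (x + s • v)) (inner ℝ (gradient f (x + t • v)) v) t := by
  have hline : HasDerivAt (fun s : ℝ => x + s • v) v t := by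
    simpa using ((hasDerivAt_id t).smul_const v).const_add x
  exact (hf _).hasGradientAt.hasFDerivAt.comp_hasDerivAt t hline

lemma inner_gradient_sub_le (hlip : ∀ x y, ‖gradient f x - gradient f y‖ ≤ Lf * ‖x - y‖)
    (x v : E) {t : ℝ} (ht : 0 ≤ t) :
    inner ℝ (gradient f (x + t • v) - gradient f x) v ≤ Lf * t * ‖v‖ ^ 2 :=
  calc inner ℝ (gradient f (x + t • v) - gradient f x) v
      ≤ ‖gradient f (x + t • v) - gradient f x‖ * ‖v‖ := real_inner_le_norm _ _
    _ ≤ Lf * ‖x + t • v - x‖ * ‖v‖ := by gcongr; exact hlip _ _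
    _ = Lf * t * ‖v‖ ^ 2 := by
      rw [add_sub_cancel_left, norm_smul, Real.norm_of_nonneg ht]; ring

theorem apply_add_le_of_gradient_lipschitz (hf : Differentiable ℝ f)
    (hlip : ∀ x y, ‖gradient f x - gradient f y‖ ≤ Lf * ‖x - y‖) (x v : E) :
    f (x + v) ≤ f x + inner ℝ (gradient f x) v + Lf / 2 * ‖v‖ ^ 2 := by
  -- `ψ` has derivative `⟪∇f(x + t v) - ∇f x, v⟫ - Lf t ‖v‖² ≤ 0` on `[0, 1]`.
  set ψ : ℝ → ℝ := fun t => f (x + t • v) - t * inner ℝ (gradient f x) v - Lf / 2 * ‖v‖ ^ 2 * t ^ 2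
  have hψ : ∀ t, HasDerivAt ψ (inner ℝ (gradient f (x + t • v) - gradient f x) v
      - Lf * t * ‖v‖ ^ 2) t := by
    intro t
    refine (((hasDerivAt_comp_add_smul hf x v t).sub
      ((hasDerivAt_id t).mul_const (inner ℝ (gradient f x) v))).sub
      ((hasDerivAt_pow 2 t).const_mul (Lf / 2 * ‖v‖ ^ 2))).congr_deriv ?_
    rw [inner_sub_left]; simp only [Nat.cast_ofNat]; ring
  have hanti : AntitoneOn ψ (Icc 0 1) :=
    antitoneOn_of_hasDerivWithinAt_nonpos (convex_Icc 0 1)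
      (fun t _ => (hψ t).continuousAt.continuousWithinAt) (fun t _ => (hψ t).hasDerivWithinAt)
      (fun t ht => by
        rw [interior_Icc] at ht
        linarith [inner_gradient_sub_le hlip x v ht.1.le])
  have h01 : ψ 1 ≤ ψ 0 := hanti (by simp) (by simp) zero_le_one
  simp only [ψ, one_smul, zero_smul, add_zero] at h01
  linarith

end Descent

lemma soft_gradient_step_le {d : ℕ} {lam L : ℝ} (hlam : 0 ≤ lam) (hL : 0 < L)
    (x g : EuclideanSpace ℝ (Fin d)) :
    lam * ∑ i, |soft (lam / L) (x - (1 / L) • g) i|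
      + L * ‖x - soft (lam / L) (x - (1 / L) • g)‖ ^ 2
      + inner ℝ g (soft (lam / L) (x - (1 / L) • g) - x) ≤ lam * ∑ i, |x i| := by
  set T := soft (lam / L) (x - (1 / L) • g)
  have h := soft_variational_ineq (div_nonneg hlam hL.le) (x - (1 / L) • g) x
  have hinner : inner ℝ (x - (1 / L) • g - T) (x - T)
      = ‖x - T‖ ^ 2 + (1 / L) * inner ℝ g (T - x) := by
    rw [sub_right_comm, inner_sub_left, real_inner_self_eq_norm_sq, real_inner_smul_left,
      ← neg_sub T x, inner_neg_right]
    ring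
  rw [hinner] at h
  have h' := mul_le_mul_of_nonneg_left h hL.le
  field_simp at h'
  linarith

theorem prox_sufficient_decrease_general (d : ℕ)
    (f : EuclideanSpace ℝ (Fin d) → ℝ) (Lf : ℝ) (hLf : 0 ≤ Lf)
    (hdiff : Differentiable ℝ f)
    (hlip : ∀ x y : EuclideanSpace ℝ (Fin d), ‖gradient f x - gradient f y‖ ≤ Lf * ‖x - y‖)
    (lam : ℝ) (hlam : 0 ≤ lam)
    (Φ : EuclideanSpace ℝ (Fin d) → ℝ) (hΦ : ∀ x, Φ x = f x + lam * ∑ i, |x i|)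
    (L : ℝ) (hL : Lf / 2 < L)
    (Tmap Gmap : EuclideanSpace ℝ (Fin d) → EuclideanSpace ℝ (Fin d))
    (hTL : ∀ x, Tmap x = soft (lam / L) (x - (1 / L) • gradient f x))
    (hGL : ∀ x, Gmap x = L • (x - Tmap x)) :
    ∀ x : EuclideanSpace ℝ (Fin d),
      ((L - Lf / 2) / L ^ 2) * ‖Gmap x‖ ^ 2 ≤ Φ x - Φ (Tmap x) ∧ Φ (Tmap x) ≤ Φ x := by
  intro x
  have hL0 : 0 < L := by linarith
  have hstep := soft_gradient_step_le hlam hL0 x (gradient f x)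
  have hdesc := apply_add_le_of_gradient_lipschitz hdiff hlip x (Tmap x - x)
  rw [add_sub_cancel, norm_sub_rev] at hdesc
  rw [← hTL] at hstep
  have hdecrease : (L - Lf / 2) * ‖x - Tmap x‖ ^ 2 ≤ Φ x - Φ (Tmap x) := by
    rw [hΦ, hΦ]; linarith
  have hG : ((L - Lf / 2) / L ^ 2) * ‖Gmap x‖ ^ 2 = (L - Lf / 2) * ‖x - Tmap x‖ ^ 2 := by
    rw [hGL, norm_smul, Real.norm_of_nonneg hL0.le]; field_simp
  have hnonneg : 0 ≤ (L - Lf / 2) * ‖x - Tmap x‖ ^ 2 := mul_nonneg (by linarith) (sq_nonneg _)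
  exact ⟨hG ▸ hdecrease, by linarith⟩

/-- Sufficient decrease for proximal gradient descent: with the prox-grad map
`T_L(x) = S_{λ/L}(x − (1/L)∇f(x))` and gradient mapping `G_L(x) = L(x − T_L(x))`,
each step decreases `Φ = f + λ‖·‖₁` by at least `((L − L_f/2)/L²)‖G_L(x)‖²`. -/
theorem prox_sufficient_decrease (d : ℕ) (hd : 1 ≤ d)
    (f : EuclideanSpace ℝ (Fin d) → ℝ) (Lf : ℝ) (hLf : 0 ≤ Lf)
    (hdiff : Differentiable ℝ f)
    (hlip : ∀ x y : EuclideanSpace ℝ (Fin d), ‖gradient f x - gradient f y‖ ≤ Lf * ‖x - y‖)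
    (lam : ℝ) (hlam : 0 ≤ lam)
    (Φ : EuclideanSpace ℝ (Fin d) → ℝ) (hΦ : ∀ x, Φ x = f x + lam * ∑ i, |x i|)
    (L : ℝ) (hL : Lf / 2 < L)
    (Tmap Gmap : EuclideanSpace ℝ (Fin d) → EuclideanSpace ℝ (Fin d))
    (hTL : ∀ x, Tmap x = soft (lam / L) (x - (1 / L) • gradient f x))
    (hGL : ∀ x, Gmap x = L • (x - Tmap x)) :
    ∀ x : EuclideanSpace ℝ (Fin d),
      ((L - Lf / 2) / L ^ 2) * ‖Gmap x‖ ^ 2 ≤ Φ x - Φ (Tmap x) ∧ Φ (Tmap x) ≤ Φ x :=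
  prox_sufficient_decrease_general d f Lf hLf hdiff hlip lam hlam Φ hΦ L hL Tmap Gmap hTL hGL
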